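/- Let q ≥ 1, α > 0, and let φ : [0,∞) → ℝ^q be continuous and bounded. Define the Kreisselmeier extended regressor Φ(t) = ∫₀ᵗ e^{−α(t−s)}·φ(s)·φ(s)ᵀ ds ∈ ℝ^{q×q} and Δ(t) = det Φ(t). If Δ is PE, i.e., there exist T' > 0 and δ' > 0 such that ∫_t^{t+T'} Δ(s)² ds ≥ δ' for all t ≥ 0, then φ is PE, i.e., there exist T > 0 and δ > 0 such that ∫_t^{t+T} φ(s)·φ(s)ᵀ ds ⪰ δ·I_q for all t ≥ 0. -/

import Mathlib

/-!
For `t ≥ 0` the filtered regressor satisfies `0 ≤ Φ(t) ≤ M` with `M` of order `q ‖φ‖∞² / α`, so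
`Δ ≤ M ^ q` and, bounding all eigenvalues of `Φ` but the smallest by `M`,
`Δ · |x|² ≤ M ^ (q - 1) · xᵀ Φ x`. Excitation of `Δ` on `[t + L, t + L + T']` therefore forces
`xᵀ Φ x` to be of size `|x|²` somewhere in that window. As `Φ` forgets the past at rate `e^{-α L}`,
for `L` large this can only come from `∫_t^{t+L+T'} (φᵀ x)²`, which gives the excitation of `φ`.
-/

open MeasureTheory

/-- The matrix `∫_a^b φ(s) φ(s)ᵀ ds`, defined entrywise. -/
noncomputable def gramOn (q : ℕ) (φ : ℝ → Fin q → ℝ) (a b : ℝ) :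
    Matrix (Fin q) (Fin q) ℝ :=
  Matrix.of fun i j => ∫ s in a..b, φ s i * φ s j

/-- The Kreisselmeier extended regressor
`Φ(t) = ∫₀ᵗ e^{-α(t-s)} φ(s) φ(s)ᵀ ds`, defined entrywise. -/
noncomputable def kreisselmeierPhi (q : ℕ) (α : ℝ) (φ : ℝ → Fin q → ℝ) (t : ℝ) :
    Matrix (Fin q) (Fin q) ℝ :=
  Matrix.of fun i j => ∫ s in (0:ℝ)..t, Real.exp (-α * (t - s)) * (φ s i * φ s j)

open Set Real Matrix Filter Topology
open scoped ComplexOrder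

namespace Matrix

variable {n : Type*} [Fintype n] [DecidableEq n]

theorem IsHermitian.posSemidef_smul_add_smul_one_iff_eigenvalues {𝕜 : Type*} [RCLike 𝕜]
    {A : Matrix n n 𝕜} (hA : A.IsHermitian) (a b : ℝ) :
    (a • A + b • (1 : Matrix n n 𝕜)).PosSemidef ↔ ∀ i, 0 ≤ a * hA.eigenvalues i + b := by
  have hdiag : diagonal (RCLike.ofReal ∘ fun i => a * hA.eigenvalues i + b) =
      a • diagonal (RCLike.ofReal ∘ hA.eigenvalues) + b • (1 : Matrix n n 𝕜) := by
    ext i j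
    by_cases h : i = j <;> simp [h, RCLike.real_smul_eq_coe_mul]
  have hconj : a • A + b • (1 : Matrix n n 𝕜) = Unitary.conjStarAlgAut 𝕜 _ hA.eigenvectorUnitary
      (diagonal (RCLike.ofReal ∘ fun i => a * hA.eigenvalues i + b)) := by
    conv_lhs => rw [hA.spectral_theorem]
    simp only [hdiag, RCLike.real_smul_eq_coe_smul (K := 𝕜), map_add, map_smul, map_one]
  rw [hconj, Unitary.conjStarAlgAut_apply, Unitary.isUnit_coe.posSemidef_star_right_conjugate_iff,
    posSemidef_diagonal_iff]
  simp only [Function.comp_apply, RCLike.ofReal_nonneg]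

theorem IsHermitian.posSemidef_smul_add_smul_one_iff_dotProduct {A : Matrix n n ℝ}
    (hA : A.IsHermitian) (a b : ℝ) :
    (a • A + b • (1 : Matrix n n ℝ)).PosSemidef ↔
      ∀ x, 0 ≤ a * (x ⬝ᵥ A *ᵥ x) + b * (x ⬝ᵥ x) := by
  rw [posSemidef_iff_dotProduct_mulVec]
  simp only [star_trivial, add_mulVec, smul_mulVec, one_mulVec, dotProduct_add, dotProduct_smul,
    smul_eq_mul, and_iff_right_iff_imp]
  exact fun _ => (hA.smul (IsSelfAdjoint.all a)).add (isHermitian_one.smul (IsSelfAdjoint.all b))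

variable {A : Matrix n n ℝ} {M : ℝ}

theorem IsHermitian.eigenvalues_le (hA : A.IsHermitian)
    (hM : ∀ x, x ⬝ᵥ A *ᵥ x ≤ M * (x ⬝ᵥ x)) (i : n) : hA.eigenvalues i ≤ M := by
  have h := (hA.posSemidef_smul_add_smul_one_iff_eigenvalues (-1) M).mp
    ((hA.posSemidef_smul_add_smul_one_iff_dotProduct (-1) M).mpr fun x => by linarith [hM x]) i
  linarith

theorem PosSemidef.det_le_pow (hA : A.PosSemidef) (hM : ∀ x, x ⬝ᵥ A *ᵥ x ≤ M * (x ⬝ᵥ x)) :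
    A.det ≤ M ^ Fintype.card n := by
  rw [hA.isHermitian.det_eq_prod_eigenvalues, ← Finset.card_univ, ← Finset.prod_const]
  exact Finset.prod_le_prod (fun i _ => hA.eigenvalues_nonneg i)
    fun i _ => hA.isHermitian.eigenvalues_le hM i

theorem PosSemidef.det_mul_dotProduct_le (hA : A.PosSemidef)
    (hM : ∀ x, x ⬝ᵥ A *ᵥ x ≤ M * (x ⬝ᵥ x)) (x : n → ℝ) :
    A.det * (x ⬝ᵥ x) ≤ M ^ (Fintype.card n - 1) * (x ⬝ᵥ A *ᵥ x) := by
  have hdet : ∀ i, A.det ≤ M ^ (Fintype.card n - 1) * hA.isHermitian.eigenvalues i := by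
    intro i
    rw [hA.isHermitian.det_eq_prod_eigenvalues, ← Finset.mul_prod_erase _ _ (Finset.mem_univ i),
      mul_comm, ← Finset.card_univ, ← Finset.card_erase_of_mem (Finset.mem_univ i),
      ← Finset.prod_const]
    exact mul_le_mul_of_nonneg_right (Finset.prod_le_prod (fun j _ => hA.eigenvalues_nonneg j)
      fun j _ => hA.isHermitian.eigenvalues_le hM j) (hA.eigenvalues_nonneg i)
  have h := (hA.isHermitian.posSemidef_smul_add_smul_one_iff_dotProduct
    (M ^ (Fintype.card n - 1)) (-A.det)).mp
    ((hA.isHermitian.posSemidef_smul_add_smul_one_iff_eigenvalues _ _).mpr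
      fun i => by linarith [hdet i]) x
  linarith

end Matrix

theorem sq_dotProduct_le_card_mul {n : Type*} [Fintype n] (v x : n → ℝ) :
    (v ⬝ᵥ x) ^ 2 ≤ Fintype.card n * ‖v‖ ^ 2 * (x ⬝ᵥ x) := by
  calc (v ⬝ᵥ x) ^ 2 ≤ (∑ i, v i ^ 2) * ∑ i, x i ^ 2 := Finset.sum_mul_sq_le_sq_mul_sq _ _ _
    _ ≤ (∑ _i : n, ‖v‖ ^ 2) * ∑ i, x i ^ 2 := by
        refine mul_le_mul_of_nonneg_right (Finset.sum_le_sum fun i _ => ?_) (by positivity)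
        rw [← sq_abs, ← Real.norm_eq_abs]
        gcongr
        exact norm_le_pi_norm v i
    _ = Fintype.card n * ‖v‖ ^ 2 * (x ⬝ᵥ x) := by
        simp [dotProduct, sq]

section ExponentialWeight

variable {α t s B : ℝ} {f : ℝ → ℝ}

theorem integral_exp_neg_mul_sub (t : ℝ) (hα : α ≠ 0) :
    ∫ u in (0:ℝ)..t, exp (-α * (t - u)) = (1 - exp (-α * t)) / α := by
  have hderiv : ∀ u ∈ uIcc 0 t, HasDerivAt (fun u => exp (-α * (t - u)) / α)
      (exp (-α * (t - u))) u := fun u _ =>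
    ((((hasDerivAt_id u).const_sub t).const_mul (-α)).exp.div_const α).congr_deriv
      (by simp only [id]; field_simp)
  rw [intervalIntegral.integral_eq_sub_of_hasDerivAt hderiv
    (Continuous.intervalIntegrable (by fun_prop) _ _)]
  simp only [sub_self, mul_zero, exp_zero, sub_zero]
  ring

theorem integral_exp_mul_le_div (hα : 0 < α) (ht : 0 ≤ t) (hB : 0 ≤ B) (hf : Continuous f)
    (hfB : ∀ u ∈ Icc 0 t, f u ≤ B) :
    ∫ u in (0:ℝ)..t, exp (-α * (t - u)) * f u ≤ B / α := by
  calc ∫ u in (0:ℝ)..t, exp (-α * (t - u)) * f u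
      ≤ ∫ u in (0:ℝ)..t, exp (-α * (t - u)) * B :=
        intervalIntegral.integral_mono_on ht (Continuous.intervalIntegrable (by fun_prop) _ _)
          (Continuous.intervalIntegrable (by fun_prop) _ _)
          fun u hu => mul_le_mul_of_nonneg_left (hfB u hu) (exp_nonneg _)
    _ = B * ((1 - exp (-α * t)) / α) := by
        rw [intervalIntegral.integral_mul_const, integral_exp_neg_mul_sub t hα.ne', mul_comm]
    _ ≤ B / α := by
        rw [mul_div_assoc']
        gcongr
        nlinarith [exp_nonneg (-α * t)]

theorem integral_exp_mul_le_exp_mul_add (hα : 0 ≤ α) (hts : t ≤ s) (hf : Continuous f)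
    (hf0 : ∀ u ∈ Icc t s, 0 ≤ f u) :
    ∫ u in (0:ℝ)..s, exp (-α * (s - u)) * f u ≤
      exp (-α * (s - t)) * (∫ u in (0:ℝ)..t, exp (-α * (t - u)) * f u) + ∫ u in t..s, f u := by
  have hint : ∀ a b, IntervalIntegrable (fun u => exp (-α * (s - u)) * f u) volume a b :=
    Continuous.intervalIntegrable (by fun_prop)
  rw [← intervalIntegral.integral_add_adjacent_intervals (hint 0 t) (hint t s),
    ← intervalIntegral.integral_const_mul]
  gcongr ?_ + ?_
  · refine le_of_eq (intervalIntegral.integral_congr fun u _ => ?_)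
    rw [← mul_assoc, ← exp_add]
    ring_nf
  · refine intervalIntegral.integral_mono_on hts (hint t s) (hf.intervalIntegrable t s)
      fun u hu => mul_le_of_le_one_left (hf0 u hu) (exp_le_one_iff.mpr ?_)
    nlinarith [hu.2]

theorem exists_exp_neg_mul_mul_le (hα : 0 < α) (B : ℝ) {ε : ℝ} (hε : 0 < ε) :
    ∃ L ≥ 0, exp (-α * L) * B ≤ ε := by
  have h : Tendsto (fun L => exp (-α * L) * B) atTop (𝓝 0) := by
    simpa [neg_mul] using
      (tendsto_exp_neg_atTop_nhds_zero.comp (tendsto_id.const_mul_atTop hα)).mul_const B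
  obtain ⟨L, hL, hL0⟩ := ((h.eventually (ge_mem_nhds hε)).and (eventually_ge_atTop 0)).exists
  exact ⟨L, hL0, hL⟩

theorem integral_sq_le_mul_integral {a b K : ℝ} (hab : a ≤ b) (hf : Continuous f)
    (hf0 : ∀ u ∈ Icc a b, 0 ≤ f u) (hfK : ∀ u ∈ Icc a b, f u ≤ K) :
    ∫ u in a..b, f u ^ 2 ≤ K * ∫ u in a..b, f u := by
  rw [← intervalIntegral.integral_const_mul]
  exact intervalIntegral.integral_mono_on hab (Continuous.intervalIntegrable (by fun_prop) _ _)
    (Continuous.intervalIntegrable (by fun_prop) _ _)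
    fun u hu => by rw [sq]; exact mul_le_mul_of_nonneg_right (hfK u hu) (hf0 u hu)

end ExponentialWeight

section IntegralGram

variable {n : Type*} {φ : ℝ → n → ℝ} {w : ℝ → ℝ}

theorem dotProduct_mulVec_of_integral [Fintype n] (hφ : Continuous φ) (hw : Continuous w)
    (a b : ℝ) (x : n → ℝ) :
    x ⬝ᵥ (Matrix.of fun i j => ∫ s in a..b, w s * (φ s i * φ s j)) *ᵥ x =
      ∫ s in a..b, w s * (φ s ⬝ᵥ x) ^ 2 := by
  have hint : ∀ i j,
      IntervalIntegrable (fun s => x i * (w s * (φ s i * φ s j) * x j)) volume a b :=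
    fun i j => Continuous.intervalIntegrable (by fun_prop) _ _
  calc x ⬝ᵥ (Matrix.of fun i j => ∫ s in a..b, w s * (φ s i * φ s j)) *ᵥ x
      = ∑ i, ∑ j, ∫ s in a..b, x i * (w s * (φ s i * φ s j) * x j) := by
        simp only [dotProduct, mulVec, of_apply, Finset.mul_sum, intervalIntegral.integral_mul_const,
          intervalIntegral.integral_const_mul]
    _ = ∫ s in a..b, ∑ i, ∑ j, x i * (w s * (φ s i * φ s j) * x j) := by
        rw [intervalIntegral.integral_finsetSum fun i _ =>
          Continuous.intervalIntegrable (by fun_prop) _ _]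
        simp only [intervalIntegral.integral_finsetSum fun j _ => hint _ j]
    _ = ∫ s in a..b, w s * (φ s ⬝ᵥ x) ^ 2 := by
        congr 1 with s
        rw [dotProduct, sq, Finset.sum_mul_sum, Finset.mul_sum]
        refine Finset.sum_congr rfl fun i _ => ?_
        rw [Finset.mul_sum]
        exact Finset.sum_congr rfl fun j _ => by ring

theorem isHermitian_of_integral (a b : ℝ) :
    (Matrix.of fun i j => ∫ s in a..b, w s * (φ s i * φ s j)).IsHermitian := by
  ext i j
  simp only [conjTranspose_apply, of_apply, star_trivial, mul_comm (φ _ i)]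

end IntegralGram

section Kreisselmeier

variable {q : ℕ} {α : ℝ} {φ : ℝ → Fin q → ℝ}

theorem dotProduct_mulVec_kreisselmeierPhi (hφ : Continuous φ) (t : ℝ) (x : Fin q → ℝ) :
    x ⬝ᵥ kreisselmeierPhi q α φ t *ᵥ x =
      ∫ u in (0:ℝ)..t, exp (-α * (t - u)) * (φ u ⬝ᵥ x) ^ 2 :=
  dotProduct_mulVec_of_integral hφ (by fun_prop) 0 t x

theorem dotProduct_mulVec_gramOn (hφ : Continuous φ) (a b : ℝ) (x : Fin q → ℝ) :
    x ⬝ᵥ gramOn q φ a b *ᵥ x = ∫ u in a..b, (φ u ⬝ᵥ x) ^ 2 := by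
  simpa [gramOn] using dotProduct_mulVec_of_integral hφ (w := fun _ => 1) continuous_const a b x

theorem isHermitian_gramOn (a b : ℝ) : (gramOn q φ a b).IsHermitian := by
  simpa [gramOn] using isHermitian_of_integral (φ := φ) (w := fun _ => 1) a b

theorem continuous_kreisselmeierPhi (hφ : Continuous φ) :
    Continuous (kreisselmeierPhi q α φ) :=
  continuous_pi fun i => continuous_pi fun j =>
    intervalIntegral.continuous_parametric_intervalIntegral_of_continuous (by fun_prop)
      continuous_id

theorem posSemidef_kreisselmeierPhi (hφ : Continuous φ) {t : ℝ} (ht : 0 ≤ t) :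
    (kreisselmeierPhi q α φ t).PosSemidef := by
  refine posSemidef_iff_dotProduct_mulVec.mpr ⟨isHermitian_of_integral 0 t, fun x => ?_⟩
  rw [star_trivial, dotProduct_mulVec_kreisselmeierPhi hφ]
  exact intervalIntegral.integral_nonneg ht fun u _ => by positivity

theorem exists_dotProduct_mulVec_kreisselmeierPhi_le (hα : 0 < α) (hφ : Continuous φ) {C : ℝ}
    (hC : ∀ t, 0 ≤ t → ‖φ t‖ ≤ C) :
    ∃ M > 0, ∀ t, 0 ≤ t → ∀ x, x ⬝ᵥ kreisselmeierPhi q α φ t *ᵥ x ≤ M * (x ⬝ᵥ x) := by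
  refine ⟨q * C ^ 2 / α + 1, by positivity, fun t ht x => ?_⟩
  have hx : 0 ≤ x ⬝ᵥ x := Finset.sum_nonneg fun i _ => mul_self_nonneg (x i)
  have hB : ∀ u ∈ Icc 0 t, (φ u ⬝ᵥ x) ^ 2 ≤ q * C ^ 2 * (x ⬝ᵥ x) := fun u hu =>
    (sq_dotProduct_le_card_mul (φ u) x).trans (by
      rw [Fintype.card_fin]
      gcongr
      exact hC u hu.1)
  calc x ⬝ᵥ kreisselmeierPhi q α φ t *ᵥ x ≤ q * C ^ 2 * (x ⬝ᵥ x) / α := by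
        rw [dotProduct_mulVec_kreisselmeierPhi hφ]
        exact integral_exp_mul_le_div hα ht (by positivity) (by fun_prop) hB
    _ ≤ (q * C ^ 2 / α + 1) * (x ⬝ᵥ x) := by
        rw [add_mul, one_mul, mul_div_right_comm]
        linarith

theorem dotProduct_mulVec_kreisselmeierPhi_le (hα : 0 ≤ α) (hφ : Continuous φ) {t s : ℝ}
    (hts : t ≤ s) (x : Fin q → ℝ) :
    x ⬝ᵥ kreisselmeierPhi q α φ s *ᵥ x ≤
      exp (-α * (s - t)) * (x ⬝ᵥ kreisselmeierPhi q α φ t *ᵥ x) + x ⬝ᵥ gramOn q φ t s *ᵥ x := by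
  simp only [dotProduct_mulVec_kreisselmeierPhi hφ, dotProduct_mulVec_gramOn hφ]
  exact integral_exp_mul_le_exp_mul_add hα hts (by fun_prop) fun u _ => sq_nonneg _

variable {M : ℝ}

theorem integral_sq_det_kreisselmeierPhi_le (hφ : Continuous φ)
    (hM : ∀ t, 0 ≤ t → ∀ x, x ⬝ᵥ kreisselmeierPhi q α φ t *ᵥ x ≤ M * (x ⬝ᵥ x))
    {a b : ℝ} (ha : 0 ≤ a) (hab : a ≤ b) :
    ∫ s in a..b, (kreisselmeierPhi q α φ s).det ^ 2 ≤
      M ^ q * ∫ s in a..b, (kreisselmeierPhi q α φ s).det := by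
  refine integral_sq_le_mul_integral hab (continuous_kreisselmeierPhi hφ).matrix_det
    (fun s hs => ?_) fun s hs => ?_
  · exact (posSemidef_kreisselmeierPhi hφ (ha.trans hs.1)).det_nonneg
  · simpa using (posSemidef_kreisselmeierPhi hφ (ha.trans hs.1)).det_le_pow (hM s (ha.trans hs.1))

theorem det_kreisselmeierPhi_mul_le (hα : 0 ≤ α) (hφ : Continuous φ) (hM0 : 0 ≤ M)
    (hM : ∀ t, 0 ≤ t → ∀ x, x ⬝ᵥ kreisselmeierPhi q α φ t *ᵥ x ≤ M * (x ⬝ᵥ x))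
    {t s L T : ℝ} (ht : 0 ≤ t) (hL : 0 ≤ L) (hLs : t + L ≤ s)
    (hsT : s ≤ t + T) (x : Fin q → ℝ) :
    (kreisselmeierPhi q α φ s).det * (x ⬝ᵥ x) ≤
      M ^ (q - 1) * (exp (-α * L) * M * (x ⬝ᵥ x) + x ⬝ᵥ gramOn q φ t (t + T) *ᵥ x) := by
  have hs : 0 ≤ s := by linarith
  have hexp : exp (-α * (s - t)) ≤ exp (-α * L) := exp_le_exp.mpr (by nlinarith)
  have hΦt : 0 ≤ x ⬝ᵥ kreisselmeierPhi q α φ t *ᵥ x := by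
    simpa using (posSemidef_kreisselmeierPhi hφ ht).dotProduct_mulVec_nonneg x
  have hgram : x ⬝ᵥ gramOn q φ t s *ᵥ x ≤ x ⬝ᵥ gramOn q φ t (t + T) *ᵥ x := by
    simp only [dotProduct_mulVec_gramOn hφ]
    exact intervalIntegral.integral_mono_interval le_rfl (by linarith) hsT
      (Eventually.of_forall fun u => sq_nonneg _) (Continuous.intervalIntegrable (by fun_prop) _ _)
  calc (kreisselmeierPhi q α φ s).det * (x ⬝ᵥ x)
      ≤ M ^ (q - 1) * (x ⬝ᵥ kreisselmeierPhi q α φ s *ᵥ x) := by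
        simpa using (posSemidef_kreisselmeierPhi hφ hs).det_mul_dotProduct_le (hM s hs) x
    _ ≤ M ^ (q - 1) * (exp (-α * (s - t)) * (x ⬝ᵥ kreisselmeierPhi q α φ t *ᵥ x)
          + x ⬝ᵥ gramOn q φ t s *ᵥ x) := by
        gcongr
        exact dotProduct_mulVec_kreisselmeierPhi_le hα hφ (by linarith) x
    _ ≤ M ^ (q - 1) * (exp (-α * L) * M * (x ⬝ᵥ x) + x ⬝ᵥ gramOn q φ t (t + T) *ᵥ x) := by
        gcongr M ^ (q - 1) * (?_ + ?_)
        rw [mul_assoc]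
        exact mul_le_mul hexp (hM t ht x) hΦt (exp_nonneg _)

theorem integral_det_kreisselmeierPhi_mul_le (hα : 0 ≤ α) (hφ : Continuous φ) (hM0 : 0 ≤ M)
    (hM : ∀ t, 0 ≤ t → ∀ x, x ⬝ᵥ kreisselmeierPhi q α φ t *ᵥ x ≤ M * (x ⬝ᵥ x))
    {t : ℝ} (ht : 0 ≤ t) {L T : ℝ} (hL : 0 ≤ L)
    (hT : 0 ≤ T) (x : Fin q → ℝ) :
    (∫ s in t + L..t + L + T, (kreisselmeierPhi q α φ s).det) * (x ⬝ᵥ x) ≤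
      T * (M ^ (q - 1) * (exp (-α * L) * M * (x ⬝ᵥ x) +
        x ⬝ᵥ gramOn q φ t (t + (L + T)) *ᵥ x)) := by
  rw [← intervalIntegral.integral_mul_const]
  calc ∫ s in t + L..t + L + T, (kreisselmeierPhi q α φ s).det * (x ⬝ᵥ x)
      ≤ ∫ _ in t + L..t + L + T, M ^ (q - 1) * (exp (-α * L) * M * (x ⬝ᵥ x) +
          x ⬝ᵥ gramOn q φ t (t + (L + T)) *ᵥ x) :=
        intervalIntegral.integral_mono_on (by linarith)
          (((continuous_kreisselmeierPhi hφ).matrix_det.mul continuous_const).intervalIntegrable _ _)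
          intervalIntegrable_const fun s hs =>
            det_kreisselmeierPhi_mul_le hα hφ hM0 hM ht hL hs.1 (by linarith [hs.2]) x
    _ = _ := by
        rw [intervalIntegral.integral_const, smul_eq_mul]
        ring

end Kreisselmeier

theorem kreisselmeier_det_pe_implies_pe_general (q : ℕ) (α : ℝ)
    (hα : 0 < α) (φ : ℝ → Fin q → ℝ) (hφc : Continuous φ)
    (hφb : ∃ C, ∀ t, 0 ≤ t → ‖φ t‖ ≤ C)
    (hΔPE : ∃ T' > (0:ℝ), ∃ δ' > (0:ℝ), ∀ t, 0 ≤ t →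
      δ' ≤ ∫ s in t..t + T', ((kreisselmeierPhi q α φ s).det) ^ 2) :
    ∃ T > (0:ℝ), ∃ δ > (0:ℝ), ∀ t, 0 ≤ t →
      (gramOn q φ t (t + T) - δ • (1 : Matrix (Fin q) (Fin q) ℝ)).PosSemidef := by
  obtain ⟨C, hC⟩ := hφb
  obtain ⟨T', hT', δ', hδ', hPE⟩ := hΔPE
  obtain ⟨M, hM0, hM⟩ := exists_dotProduct_mulVec_kreisselmeierPhi_le hα hφc hC
  set K := T' * M ^ (q - 1)
  set c := δ' / (M ^ q * K)
  -- `Δ` has mass at least `c * K` on every window, and the delay `L` is chosen so that the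
  -- part of `Φ` remembered from before `t` accounts for at most half of it.
  obtain ⟨L, hL0, hL⟩ := exists_exp_neg_mul_mul_le hα M (half_pos (by positivity : 0 < c))
  refine ⟨L + T', by positivity, c / 2, by positivity, fun t ht => ?_⟩
  have hsplit : gramOn q φ t (t + (L + T')) - (c / 2) • 1 =
      (1 : ℝ) • gramOn q φ t (t + (L + T')) + (-(c / 2)) • 1 := by
    rw [one_smul, neg_smul, sub_eq_add_neg]
  rw [hsplit, (isHermitian_gramOn _ _).posSemidef_smul_add_smul_one_iff_dotProduct]
  intro x
  have hwindow := (hPE (t + L) (by positivity)).trans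
    (integral_sq_det_kreisselmeierPhi_le hφc hM (by positivity) (by linarith))
  have hest := integral_det_kreisselmeierPhi_mul_le hα.le hφc hM0.le hM ht hL0 hT'.le x
  have hK : 0 < K := by positivity
  have hxx : 0 ≤ x ⬝ᵥ x := Finset.sum_nonneg fun i _ => mul_self_nonneg (x i)
  have hcK : c * K ≤ ∫ s in t + L..t + L + T', (kreisselmeierPhi q α φ s).det := by
    refine le_of_mul_le_mul_left ?_ (pow_pos hM0 q)
    rwa [show M ^ q * (c * K) = δ' by simp only [c]; field_simp]
  suffices K * (c / 2 * (x ⬝ᵥ x)) ≤ K * (x ⬝ᵥ gramOn q φ t (t + (L + T')) *ᵥ x) by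
    linarith [le_of_mul_le_mul_left this hK]
  nlinarith [mul_le_mul_of_nonneg_left (mul_le_mul_of_nonneg_right hL hxx) hK.le,
    mul_le_mul_of_nonneg_right hcK hxx]

/-- Result R1, ⇐: If `Δ = det Φ` is PE then `φ` is PE. -/
theorem kreisselmeier_det_pe_implies_pe (q : ℕ) (hq : 1 ≤ q) (α : ℝ)
    (hα : 0 < α) (φ : ℝ → Fin q → ℝ) (hφc : Continuous φ)
    (hφb : ∃ C, ∀ t, 0 ≤ t → ‖φ t‖ ≤ C)
    (hΔPE : ∃ T' > (0:ℝ), ∃ δ' > (0:ℝ), ∀ t, 0 ≤ t →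
      δ' ≤ ∫ s in t..t + T', ((kreisselmeierPhi q α φ s).det) ^ 2) :
    ∃ T > (0:ℝ), ∃ δ > (0:ℝ), ∀ t, 0 ≤ t →
      (gramOn q φ t (t + T) - δ • (1 : Matrix (Fin q) (Fin q) ℝ)).PosSemidef :=
  kreisselmeier_det_pe_implies_pe_general q α hα φ hφc hφb hΔPE
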